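/- Let E ⊂ ℝⁿ be finite, Γ⃗₀ a shape field on E, M₀ > 0, and D = dim P. For x ∈ E and S ⊆ E, define Γ(x,S) as the set of polynomials P^x ∈ P such that there exists a Whitney field P⃗ = (P^y)_{y∈S∪{x}} on S∪{x} with ‖P⃗‖_{Ċ^m(S∪{x})} ≤ M₀ and P^y ∈ Γ₀(y, M₀) for all y ∈ S∪{x}. Fix x ∈ E and l ≥ 0, and suppose Γ(x,S) ≠ ∅ for all S ⊆ E with #(S) ≤ (D+2)^{l+1}. Then the intersection Γ_l^{fp}(x, M₀) := ⋂_{S⊆E, #(S)≤(D+2)^l} Γ(x,S) is nonempty. -/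

import Mathlib

noncomputable section

/-- Iterated partial derivative `∂^β` of a multivariate polynomial. -/
def pdiff {n : ℕ} (β : Fin n → ℕ) (P : MvPolynomial (Fin n) ℝ) :
    MvPolynomial (Fin n) ℝ :=
  (List.finRange n).foldr (fun i Q => (fun R => MvPolynomial.pderiv i R)^[β i] Q) P

/-- `∂^β P` evaluated at a point of Euclidean space. -/
def pdEval {n : ℕ} (β : Fin n → ℕ) (P : MvPolynomial (Fin n) ℝ)
    (x : EuclideanSpace ℝ (Fin n)) : ℝ :=
  MvPolynomial.eval (fun i => x i) (pdiff β P)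

/-- The Whitney seminorm bound: `‖(P^y)_{y ∈ T}‖_{Ċ^m(T)} ≤ M₀`. -/
def WhitneyNormLE (m n : ℕ) (M₀ : ℝ) (T : Set (EuclideanSpace ℝ (Fin n)))
    (P : EuclideanSpace ℝ (Fin n) → MvPolynomial (Fin n) ℝ) : Prop :=
  ∀ z ∈ T, ∀ w ∈ T, z ≠ w → ∀ α : Fin n → ℕ, (∑ i, α i) ≤ m →
    |pdEval α (P z - P w) z| ≤ M₀ * dist z w ^ (m - ∑ i, α i)

/-- `Γ(x, S)`: the set of `P^x ∈ 𝒫` arising from Whitney fields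
`(P^y)_{y ∈ S ∪ {x}}` of `Ċ^m`-seminorm at most `M₀` with `P^y ∈ Γ₀(y, M₀)`
for all `y ∈ S ∪ {x}`. -/
def GammaS (m n : ℕ) (Γ₀ : EuclideanSpace ℝ (Fin n) → ℝ → Set (MvPolynomial (Fin n) ℝ))
    (M₀ : ℝ) (x : EuclideanSpace ℝ (Fin n)) (S : Set (EuclideanSpace ℝ (Fin n))) :
    Set (MvPolynomial (Fin n) ℝ) :=
  {Px | ∃ P : EuclideanSpace ℝ (Fin n) → MvPolynomial (Fin n) ℝ,
    P x = Px ∧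
    (∀ y ∈ S ∪ {x}, (P y).totalDegree ≤ m - 1 ∧ P y ∈ Γ₀ y M₀) ∧
    WhitneyNormLE m n M₀ (S ∪ {x}) P}

/-!
Each `Γ(x, S)` is a convex subset of the `D`-dimensional space `𝒫`: a convex combination of
two admissible Whitney fields is admissible, since `Γ₀(y, M₀)` is convex and the bound
`‖P⃗‖_{Ċ^m} ≤ M₀` is convex in `P⃗`. Moreover `Γ(x, S)` shrinks as `S` grows. Given `D + 1`
sets `S₁, …, S_{D+1} ⊆ E` with `#(Sᵢ) ≤ (D+2)^l`, their union has at most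
`(D+1)(D+2)^l ≤ (D+2)^{l+1}` points, so `Γ(x, ⋃ Sᵢ) ⊆ ⋂ Γ(x, Sᵢ)` is nonempty.
Helly's theorem, applied to the finitely many `S ⊆ E`, then gives a common point of all
`Γ(x, S)` with `#(S) ≤ (D+2)^l`.
-/

open MvPolynomial Set

variable {n : ℕ}

def pdiffₗ (β : Fin n → ℕ) : Module.End ℝ (MvPolynomial (Fin n) ℝ) :=
  ((List.finRange n).map fun i =>
    (pderiv i : Derivation ℝ (MvPolynomial (Fin n) ℝ) _).toLinearMap ^ β i).prod

theorem pdiffₗ_apply (β : Fin n → ℕ) (P : MvPolynomial (Fin n) ℝ) : pdiffₗ β P = pdiff β P := by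
  unfold pdiffₗ pdiff
  induction List.finRange n with
  | nil => rfl
  | cons i l ih =>
    rw [List.map_cons, List.prod_cons, Module.End.mul_apply, ih, Module.End.coe_pow,
      List.foldr_cons]
    rfl

theorem pdEval_add (β : Fin n → ℕ) (P Q : MvPolynomial (Fin n) ℝ)
    (z : EuclideanSpace ℝ (Fin n)) : pdEval β (P + Q) z = pdEval β P z + pdEval β Q z := by
  simp only [pdEval, ← pdiffₗ_apply, map_add]

theorem pdEval_smul (β : Fin n → ℕ) (c : ℝ) (P : MvPolynomial (Fin n) ℝ)
    (z : EuclideanSpace ℝ (Fin n)) : pdEval β (c • P) z = c * pdEval β P z := by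
  simp only [pdEval, ← pdiffₗ_apply, map_smul, smul_eval]

theorem convex_setOf_whitneyNormLE (m : ℕ) (M₀ : ℝ) (T : Set (EuclideanSpace ℝ (Fin n))) :
    Convex ℝ {P | WhitneyNormLE m n M₀ T P} := by
  intro P hP Q hQ a b ha hb hab z hz w hw hzw α hα
  set R := M₀ * dist z w ^ (m - ∑ i, α i)
  have hdiff : (a • P + b • Q) z - (a • P + b • Q) w = a • (P z - P w) + b • (Q z - Q w) := by
    simp only [Pi.add_apply, Pi.smul_apply]
    module
  rw [hdiff, pdEval_add, pdEval_smul, pdEval_smul]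
  calc |a * pdEval α (P z - P w) z + b * pdEval α (Q z - Q w) z|
      ≤ a * |pdEval α (P z - P w) z| + b * |pdEval α (Q z - Q w) z| := by
        refine (abs_add_le _ _).trans_eq ?_
        rw [abs_mul, abs_mul, abs_of_nonneg ha, abs_of_nonneg hb]
    _ ≤ a * R + b * R := by
        gcongr
        exacts [hP z hz w hw hzw α hα, hQ z hz w hw hzw α hα]
    _ = R := by rw [← add_mul, hab, one_mul]

section GammaS

variable {m : ℕ} {Γ₀ : EuclideanSpace ℝ (Fin n) → ℝ → Set (MvPolynomial (Fin n) ℝ)} {M₀ : ℝ}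
  {x : EuclideanSpace ℝ (Fin n)}

theorem antitone_gammaS : Antitone (GammaS m n Γ₀ M₀ x) := by
  intro S S' hS
  have hsub : S ∪ {x} ⊆ S' ∪ {x} := union_subset_union_left _ hS
  rintro _ ⟨P, rfl, hP, hW⟩
  exact ⟨P, rfl, fun y hy => hP y (hsub hy), fun z hz w hw => hW z (hsub hz) w (hsub hw)⟩

theorem gammaS_subset_restrictTotalDegree (S : Set (EuclideanSpace ℝ (Fin n))) :
    GammaS m n Γ₀ M₀ x S ⊆ restrictTotalDegree (Fin n) ℝ (m - 1) := by
  rintro _ ⟨P, rfl, hP, -⟩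
  exact (mem_restrictTotalDegree _ _ _).2 (hP x (mem_union_right _ rfl)).1

theorem gammaS_eq_image (S : Set (EuclideanSpace ℝ (Fin n))) :
    GammaS m n Γ₀ M₀ x S = (fun P => P x) ''
      ((S ∪ {x}).pi (fun y => (restrictTotalDegree (Fin n) ℝ (m - 1) : Set _) ∩ Γ₀ y M₀) ∩
        {P | WhitneyNormLE m n M₀ (S ∪ {x}) P}) := by
  ext Px
  simp only [GammaS, mem_image, mem_inter_iff, mem_pi, mem_ofPred_eq, SetLike.mem_coe,
    mem_restrictTotalDegree]
  constructor
  · rintro ⟨P, hPx, hP, hW⟩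
    exact ⟨P, ⟨hP, hW⟩, hPx⟩
  · rintro ⟨P, ⟨hP, hW⟩, hPx⟩
    exact ⟨P, hPx, hP, hW⟩

theorem convex_gammaS {S : Set (EuclideanSpace ℝ (Fin n))}
    (hΓ₀ : ∀ y ∈ S ∪ {x}, Convex ℝ (Γ₀ y M₀)) : Convex ℝ (GammaS m n Γ₀ M₀ x S) := by
  rw [gammaS_eq_image]
  refine Convex.linear_image ?_ (LinearMap.proj x)
  exact (convex_pi fun y hy => (Submodule.convex _).inter (hΓ₀ y hy)).inter
    (convex_setOf_whitneyNormLE m M₀ _)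

end GammaS

theorem Convex.helly_theorem_of_antitone {ι V : Type*} [AddCommGroup V] [Module ℝ V]
    [FiniteDimensional ℝ V] {F : Set ι → Set V} (hF : Antitone F) {U : Set ι} (hU : U.Finite)
    (hconv : ∀ S ⊆ U, Convex ℝ (F S)) {N : ℕ}
    (hne : ∀ S ⊆ U, S.ncard ≤ (Module.finrank ℝ V + 1) * N → (F S).Nonempty) :
    ∃ p, ∀ S ⊆ U, S.ncard ≤ N → p ∈ F S := by
  classical
  set s := hU.toFinset.powerset.filter fun t => t.card ≤ N
  have hs : ∀ t ∈ s, (t : Set ι) ⊆ U ∧ t.card ≤ N := fun t ht => by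
    simpa [s, ← Finset.coe_subset] using ht
  obtain ⟨p, hp⟩ : (⋂ t ∈ s, F t).Nonempty := by
    refine helly_theorem' (fun t ht => hconv _ (hs t ht).1) fun I hI hIcard => ?_
    have hunion : ((I.biUnion id : Finset ι) : Set ι) ⊆ U := by
      simpa using fun t ht => (hs t (hI ht)).1
    have hcard : (I.biUnion id : Set ι).ncard ≤ (Module.finrank ℝ V + 1) * N := by
      rw [ncard_coe_finset]
      exact (Finset.card_biUnion_le_card_mul I id N fun t ht => (hs t (hI ht)).2).trans
        (Nat.mul_le_mul_right N hIcard)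
    obtain ⟨p, hp⟩ := hne _ hunion hcard
    exact ⟨p, mem_iInter₂.2 fun t ht =>
      hF (Finset.coe_subset.2 (Finset.subset_biUnion_of_mem id ht)) hp⟩
  refine ⟨p, fun S hS hSN => ?_⟩
  have hSfin := hU.subset hS
  have hSs : hSfin.toFinset ∈ s := by
    simpa [s, ← ncard_eq_toFinset_card S hSfin] using ⟨hS, hSN⟩
  simpa using mem_iInter₂.1 hp _ hSs

theorem fp_intersection_nonempty_general (m n : ℕ)
    (E : Set (EuclideanSpace ℝ (Fin n))) (hE : E.Finite)
    (Γ₀ : EuclideanSpace ℝ (Fin n) → ℝ → Set (MvPolynomial (Fin n) ℝ))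
    (hconv : ∀ x ∈ E, ∀ M : ℝ, 0 < M → Convex ℝ (Γ₀ x M))
    (M₀ : ℝ) (hM₀ : 0 < M₀) (x : EuclideanSpace ℝ (Fin n)) (hx : x ∈ E) (l : ℕ)
    (D : ℕ) (hD : D = Module.finrank ℝ (MvPolynomial.restrictTotalDegree (Fin n) ℝ (m - 1)))
    (hne : ∀ S : Set (EuclideanSpace ℝ (Fin n)), S ⊆ E → S.ncard ≤ (D + 2) ^ (l + 1) →
      (GammaS m n Γ₀ M₀ x S).Nonempty) :
    ∃ Px : MvPolynomial (Fin n) ℝ,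
      ∀ S : Set (EuclideanSpace ℝ (Fin n)), S ⊆ E → S.ncard ≤ (D + 2) ^ l →
        Px ∈ GammaS m n Γ₀ M₀ x S := by
  subst hD
  set K := restrictTotalDegree (Fin n) ℝ (m - 1)
  have hconvS : ∀ S ⊆ E, Convex ℝ (GammaS m n Γ₀ M₀ x S) := fun S hS =>
    convex_gammaS fun y hy => hconv y (union_subset hS (singleton_subset_iff.2 hx) hy) M₀ hM₀
  have hcard : (Module.finrank ℝ K + 1) * (Module.finrank ℝ K + 2) ^ l ≤
      (Module.finrank ℝ K + 2) ^ (l + 1) := by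
    rw [pow_succ']
    gcongr
    omega
  obtain ⟨p, hp⟩ := Convex.helly_theorem_of_antitone
    (F := fun S => K.subtype ⁻¹' GammaS m n Γ₀ M₀ x S)
    (fun S T hST => preimage_mono (antitone_gammaS hST)) hE
    (fun S hS => (hconvS S hS).linear_preimage K.subtype)
    (fun S hS hSN => by
      obtain ⟨Px, hPx⟩ := hne S hS (hSN.trans hcard)
      exact ⟨⟨Px, gammaS_subset_restrictTotalDegree S hPx⟩, hPx⟩)
  exact ⟨p, hp⟩

/-- Lemma 10.1: if `Γ(x, S) ≠ ∅` for all `S ⊆ E` with `#(S) ≤ (D+2)^{l+1}`, then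
`Γ_l^{fp}(x, M₀) = ⋂_{S ⊆ E, #(S) ≤ (D+2)^l} Γ(x, S)` is nonempty.
Here `D = dim 𝒫`. -/
theorem fp_intersection_nonempty (m n : ℕ) (hm : 0 < m) (hn : 0 < n)
    (E : Set (EuclideanSpace ℝ (Fin n))) (hE : E.Finite)
    (Γ₀ : EuclideanSpace ℝ (Fin n) → ℝ → Set (MvPolynomial (Fin n) ℝ))
    (hconv : ∀ x ∈ E, ∀ M : ℝ, 0 < M → Convex ℝ (Γ₀ x M))
    (hdeg : ∀ x ∈ E, ∀ M : ℝ, 0 < M → ∀ P ∈ Γ₀ x M, P.totalDegree ≤ m - 1)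
    (hmono : ∀ x ∈ E, ∀ M' M : ℝ, 0 < M' → M' ≤ M → Γ₀ x M' ⊆ Γ₀ x M)
    (M₀ : ℝ) (hM₀ : 0 < M₀) (x : EuclideanSpace ℝ (Fin n)) (hx : x ∈ E) (l : ℕ)
    (D : ℕ) (hD : D = Module.finrank ℝ (MvPolynomial.restrictTotalDegree (Fin n) ℝ (m - 1)))
    (hne : ∀ S : Set (EuclideanSpace ℝ (Fin n)), S ⊆ E → S.ncard ≤ (D + 2) ^ (l + 1) →
      (GammaS m n Γ₀ M₀ x S).Nonempty) :
    ∃ Px : MvPolynomial (Fin n) ℝ,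
      ∀ S : Set (EuclideanSpace ℝ (Fin n)), S ⊆ E → S.ncard ≤ (D + 2) ^ l →
        Px ∈ GammaS m n Γ₀ M₀ x S :=
  fp_intersection_nonempty_general m n E hE Γ₀ hconv M₀ hM₀ x hx l D hD hne

end
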